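/- arXiv:1207.1636 — 5 statements merged into one kernel-verified Lean document; each statement's English description precedes it below -/
import Mathlib

section
/- For the Hoppe tree with parameter θ > 0, E[U_n] = (θ+n)(θ+n-1)·[2/(1+θ) − 1/(θ+n-1) − (1 + h_{n-1}^θ)/(θ+n)], where h_m^θ = Σ_{j=1}^{m-1} 1/(θ+j). Equivalently, E[U_n]/((θ+n)(θ+n-1)) = Σ_{j=1}^{n-1} (1 + h_j^θ)/((θ+j)(θ+j+1)). -/
set_option maxHeartbeats 1000000 in
/-- For the Hoppe tree with parameter `θ > 0`, the expectation `u n = E[U_n]`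
(characterized by `u 1 = 0` and `u n = ((θ+n)/(θ+n-2))·u (n-1) + h_{n-1}^θ + 1`)
equals `(θ+n)(θ+n-1)·[2/(1+θ) − 1/(θ+n-1) − (1+h_{n-1}^θ)/(θ+n)]` for `n ≥ 2`;
equivalently `u n/((θ+n)(θ+n-1)) = Σ_{j=1}^{n-1} (1+h_j^θ)/((θ+j)(θ+j+1))` for `n ≥ 1`,
where `h_m^θ = Σ_{j=1}^{m-1} 1/(θ+j)`. -/
theorem hoppe_tree_expected_U (θ : ℝ) (hθ : 0 < θ) (u : ℕ → ℝ)
    (h1 : u 1 = 0)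
    (hrec : ∀ n : ℕ, 2 ≤ n →
      u n = ((θ + n) / (θ + n - 2)) * u (n - 1)
              + (∑ j ∈ Finset.Icc 1 (n - 2), 1 / (θ + j)) + 1) :
    (∀ n : ℕ, 2 ≤ n →
      u n = (θ + n) * (θ + n - 1)
              * (2 / (1 + θ) - 1 / (θ + n - 1)
                  - (1 + ∑ j ∈ Finset.Icc 1 (n - 2), 1 / (θ + j)) / (θ + n))) ∧
    (∀ n : ℕ, 1 ≤ n →
      u n / ((θ + n) * (θ + n - 1))
        = ∑ j ∈ Finset.Icc 1 (n - 1),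
            (1 + ∑ k ∈ Finset.Icc 1 (j - 1), 1 / (θ + k)) / ((θ + j) * (θ + j + 1))) := by
  have h1θ : (1:ℝ) + θ ≠ 0 := by positivity
  have key : ∀ n : ℕ, 2 ≤ n →
      u n = (θ + n) * (θ + n - 1)
              * (2 / (1 + θ) - 1 / (θ + n - 1)
                  - (1 + ∑ j ∈ Finset.Icc 1 (n - 2), 1 / (θ + j)) / (θ + n)) := by
    intro n hn
    induction n, hn using Nat.le_induction with
    | base =>
      have h := hrec 2 le_rfl
      norm_num [h1] at h
      rw [h]
      simp only [show (2:ℕ) - 2 = 0 from rfl, show Finset.Icc 1 0 = ∅ from rfl,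
        Finset.sum_empty, add_zero, Nat.cast_ofNat]
      have h2 : θ + 2 ≠ 0 := by positivity
      have h3 : θ + 2 - 1 ≠ 0 := by intro h'; nlinarith
      field_simp
      ring
    | succ n hn ih =>
      obtain ⟨k, rfl⟩ : ∃ k, n = k + 2 := ⟨n - 2, by omega⟩
      rw [show k + 2 + 1 = k + 3 from rfl]
      have hsplit : ∑ j ∈ Finset.Icc 1 (k + 1), 1 / (θ + (j:ℝ))
          = (∑ j ∈ Finset.Icc 1 k, 1 / (θ + (j:ℝ))) + 1 / (θ + ((k:ℝ) + 1)) := by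
        rw [Finset.sum_Icc_succ_top (by omega : 1 ≤ k + 1)]
        push_cast
        ring_nf
      have h := hrec (k + 3) (by omega)
      rw [show k + 3 - 1 = k + 2 from rfl, show k + 3 - 2 = k + 1 from rfl] at h
      rw [show k + 2 - 2 = k from rfl] at ih
      rw [hsplit, ih] at h
      rw [show k + 3 - 2 = k + 1 from rfl, hsplit, h]
      push_cast
      set H := ∑ j ∈ Finset.Icc 1 k, 1 / (θ + (j:ℝ)) with hH
      have hk : (0:ℝ) ≤ (k:ℝ) := Nat.cast_nonneg k
      have d1 : θ + ((k:ℝ) + 1) ≠ 0 := by positivity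
      have d2 : θ + ((k:ℝ) + 2) ≠ 0 := by positivity
      have d3 : θ + ((k:ℝ) + 3) ≠ 0 := by positivity
      have d4 : θ + ((k:ℝ) + 2) - 1 ≠ 0 := by intro h'; nlinarith
      have d5 : θ + ((k:ℝ) + 3) - 1 ≠ 0 := by intro h'; nlinarith
      have d6 : θ + ((k:ℝ) + 3) - 2 ≠ 0 := by intro h'; nlinarith
      field_simp
      ring
  have Ssum : ∀ n : ℕ, 2 ≤ n →
      (∑ j ∈ Finset.Icc 1 (n - 1),
          (1 + ∑ l ∈ Finset.Icc 1 (j - 1), 1 / (θ + l)) / ((θ + j) * (θ + j + 1)))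
        = 2 / (1 + θ) - 1 / (θ + n - 1)
            - (1 + ∑ j ∈ Finset.Icc 1 (n - 2), 1 / (θ + j)) / (θ + n) := by
    intro n hn
    induction n, hn using Nat.le_induction with
    | base =>
      simp only [show (2:ℕ) - 1 = 1 from rfl, show (2:ℕ) - 2 = 0 from rfl,
        show (1:ℕ) - 1 = 0 from rfl, Finset.Icc_self, Finset.sum_singleton,
        show Finset.Icc 1 0 = ∅ from rfl, Finset.sum_empty, add_zero, Nat.cast_one,
        Nat.cast_ofNat]
      have h2 : θ + 2 ≠ 0 := by positivity
      have h3 : θ + 2 - 1 ≠ 0 := by intro h'; nlinarith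
      have h5 : θ + 1 ≠ 0 := by positivity
      have h6 : θ + 1 + 1 ≠ 0 := by positivity
      field_simp
      ring
    | succ n hn ih =>
      obtain ⟨k, rfl⟩ : ∃ k, n = k + 2 := ⟨n - 2, by omega⟩
      rw [show k + 2 + 1 = k + 3 from rfl, show k + 3 - 1 = k + 2 from rfl,
        show k + 3 - 2 = k + 1 from rfl]
      rw [show k + 2 - 2 = k from rfl, show k + 2 - 1 = k + 1 from rfl] at ih
      rw [Finset.sum_Icc_succ_top (by omega : 1 ≤ k + 2), ih,
        show k + 2 - 1 = k + 1 from rfl]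
      have hsplit : ∑ j ∈ Finset.Icc 1 (k + 1), 1 / (θ + (j:ℝ))
          = (∑ j ∈ Finset.Icc 1 k, 1 / (θ + (j:ℝ))) + 1 / (θ + ((k:ℝ) + 1)) := by
        rw [Finset.sum_Icc_succ_top (by omega : 1 ≤ k + 1)]
        push_cast
        ring_nf
      rw [hsplit]
      push_cast
      set H := ∑ j ∈ Finset.Icc 1 k, 1 / (θ + (j:ℝ)) with hH
      have hk : (0:ℝ) ≤ (k:ℝ) := Nat.cast_nonneg k
      have d1 : θ + ((k:ℝ) + 1) ≠ 0 := by positivity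
      have d2 : θ + ((k:ℝ) + 2) ≠ 0 := by positivity
      have d3 : θ + ((k:ℝ) + 3) ≠ 0 := by positivity
      have d4 : θ + ((k:ℝ) + 2) - 1 ≠ 0 := by intro h'; nlinarith
      have d5 : θ + ((k:ℝ) + 3) - 1 ≠ 0 := by intro h'; nlinarith
      have d6 : θ + ((k:ℝ) + 2) + 1 ≠ 0 := by positivity
      field_simp
      ring
  refine ⟨key, ?_⟩
  intro n hn
  rcases eq_or_lt_of_le hn with h | h
  · have : n = 1 := h.symm
    subst this
    simp [h1]
  · have hn2 : 2 ≤ n := h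
    rw [key n hn2, Ssum n hn2]
    have hD : (θ + (n:ℝ)) * (θ + (n:ℝ) - 1) ≠ 0 := by
      have hc : (2:ℝ) ≤ (n:ℝ) := by exact_mod_cast hn2
      have h5 : (0:ℝ) < θ + (n:ℝ) := by linarith
      have h6 : (0:ℝ) < θ + (n:ℝ) - 1 := by linarith
      positivity
    rw [mul_div_cancel_left₀ _ hD]
end

section
/- If a random variable U with finite second moment satisfies U =ᵈ V²·U* + (1−V)²·U + V² with U, U*, V independent, U* =ᵈ U, V ~ Uniform[0,1], then E[U²] = 11/9 and Var(U) = 2/9. -/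
/-!
Write `W = V² U* + (1 - V)² U + V²`. Conditionally on `V = v`, `W` is an affine combination of the
independent copies `U*` and `U`, so its first two moments are explicit polynomials in `v`, `E[U]`
and `Var(U)`. Integrating over `v ∈ [0, 1]` and using `W =ᵈ U` gives `E[U] = (2 E[U] + 1) / 3`,
hence `E[U] = 1`, and then a linear equation for `Var(U)` whose solution is `2/9`.
-/

open MeasureTheory ProbabilityTheory

lemma integral_zero_one_quartic (a b c d e : ℝ) :
    ∫ x in (0 : ℝ)..1, (a * x ^ 4 + b * x ^ 3 + c * x ^ 2 + d * x + e) =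
      a / 5 + b / 4 + c / 3 + d / 2 + e := by
  simp (disch := (apply Continuous.intervalIntegrable; fun_prop)) only
    [intervalIntegral.integral_add, intervalIntegral.integral_const_mul, integral_pow,
      intervalIntegral.integral_const]
  rw [intervalIntegral.integral_const_mul, integral_id]
  norm_num
  ring

lemma integral_zero_one_conditional_mean (m : ℝ) :
    ∫ v in (0 : ℝ)..1, (v ^ 2 * m + (1 - v) ^ 2 * m + v ^ 2) = (2 * m + 1) / 3 := by
  rw [intervalIntegral.integral_congr (g := fun v => 0 * v ^ 4 + 0 * v ^ 3 + (2 * m + 1) * v ^ 2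
    + (-2 * m) * v + m) (fun v _ => by ring), integral_zero_one_quartic]
  ring

lemma integral_zero_one_conditional_second_moment (m s : ℝ) :
    ∫ v in (0 : ℝ)..1,
        ((v ^ 2 * m + (1 - v) ^ 2 * m + v ^ 2) ^ 2 + (v ^ 2) ^ 2 * s + ((1 - v) ^ 2) ^ 2 * s) =
      ((m + 1) ^ 2 + m ^ 2) / 5 + m * (m + 1) / 15 + 2 / 5 * s := by
  rw [intervalIntegral.integral_congr (g := fun v => ((2 * m + 1) ^ 2 + 2 * s) * v ^ 4
    + (-4 * m * (2 * m + 1) - 4 * s) * v ^ 3 + (8 * m ^ 2 + 2 * m + 6 * s) * v ^ 2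
    + (-4 * m ^ 2 - 4 * s) * v + (m ^ 2 + s)) (fun v _ => by ring), integral_zero_one_quartic]
  ring

namespace ProbabilityTheory

variable {Ω : Type*} {mΩ : MeasurableSpace Ω} {μ : Measure Ω}

theorem IndepFun.integral_comp_eq_integral_integral {β γ E : Type*} [MeasurableSpace β]
    [MeasurableSpace γ] [NormedAddCommGroup E] [NormedSpace ℝ E] [IsFiniteMeasure μ]
    {X : Ω → β} {Y : Ω → γ} {F : β × γ → E} (hXY : IndepFun X Y μ) (hX : Measurable X)
    (hY : Measurable Y) (hF : StronglyMeasurable F)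
    (hint : Integrable (fun ω => F (X ω, Y ω)) μ) :
    ∫ ω, F (X ω, Y ω) ∂μ = ∫ y, ∫ ω, F (X ω, y) ∂μ ∂(μ.map Y) := by
  have hXYm : Measurable fun ω => (X ω, Y ω) := hX.prodMk hY
  have hmap := hXY.map_prod_eq_prod_map_map hX.aemeasurable hY.aemeasurable
  have hint' : Integrable F ((μ.map X).prod (μ.map Y)) := by
    rw [← hmap]
    exact (integrable_map_measure hF.aestronglyMeasurable hXYm.aemeasurable).mpr hint
  calc ∫ ω, F (X ω, Y ω) ∂μ = ∫ p, F p ∂((μ.map X).prod (μ.map Y)) := by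
        rw [← hmap, integral_map hXYm.aemeasurable hF.aestronglyMeasurable]
    _ = ∫ y, ∫ x, F (x, y) ∂(μ.map X) ∂(μ.map Y) := integral_prod_symm F hint'
    _ = ∫ y, ∫ ω, F (X ω, y) ∂μ ∂(μ.map Y) := by
        congr with y
        exact integral_map hX.aemeasurable
          (hF.comp_measurable (measurable_id.prodMk measurable_const)).aestronglyMeasurable

theorem IndepFun.integral_comp_eq_intervalIntegral {β E : Type*} [MeasurableSpace β]
    [NormedAddCommGroup E] [NormedSpace ℝ E] [IsFiniteMeasure μ]
    {X : Ω → β} {V : Ω → ℝ} {F : β × ℝ → E} (hXV : IndepFun X V μ) (hX : Measurable X)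
    (hV : Measurable V) (hunif : μ.map V = volume.restrict (Set.Icc 0 1))
    (hF : StronglyMeasurable F) (hint : Integrable (fun ω => F (X ω, V ω)) μ) :
    ∫ ω, F (X ω, V ω) ∂μ = ∫ v in (0 : ℝ)..1, ∫ ω, F (X ω, v) ∂μ := by
  rw [hXV.integral_comp_eq_integral_integral hX hV hF hint, hunif, integral_Icc_eq_integral_Ioc,
    ← intervalIntegral.integral_of_le zero_le_one]

variable [IsProbabilityMeasure μ] {X Y : Ω → ℝ}

lemma integral_mul_add_mul_add_const (hX : Integrable X μ) (hY : Integrable Y μ) (a b c : ℝ) :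
    ∫ ω, (a * X ω + b * Y ω + c) ∂μ = a * μ[X] + b * μ[Y] + c := by
  have hXa := hX.const_mul a
  have hYb := hY.const_mul b
  have hXaYb : Integrable (fun ω => a * X ω + b * Y ω) μ := hXa.add hYb
  rw [integral_add hXaYb (integrable_const c), integral_add hXa hYb, integral_const_mul,
    integral_const_mul]
  simp

lemma IndepFun.integral_sq_mul_add_mul_add_const (hXY : IndepFun X Y μ) (hX : MemLp X 2 μ)
    (hY : MemLp Y 2 μ) (a b c : ℝ) :
    ∫ ω, (a * X ω + b * Y ω + c) ^ 2 ∂μ =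
      (a * μ[X] + b * μ[Y] + c) ^ 2 + a ^ 2 * Var[X; μ] + b ^ 2 * Var[Y; μ] := by
  have hXaYb : MemLp (fun ω => a * X ω + b * Y ω) 2 μ := (hX.const_mul a).add (hY.const_mul b)
  have hZ : MemLp (fun ω => a * X ω + b * Y ω + c) 2 μ := hXaYb.add (memLp_const c)
  have hvar : Var[fun ω => a * X ω + b * Y ω + c; μ] = a ^ 2 * Var[X; μ] + b ^ 2 * Var[Y; μ] := by
    rw [variance_add_const hXaYb.1,
      show (fun ω => a * X ω + b * Y ω) = (fun ω => a * X ω) + fun ω => b * Y ω from rfl,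
      IndepFun.variance_add (hX.const_mul a) (hY.const_mul b)
        (hXY.comp (measurable_const_mul a) (measurable_const_mul b)),
      variance_const_mul, variance_const_mul]
  rw [variance_eq_sub hZ, integral_mul_add_mul_add_const (hX.integrable one_le_two)
    (hY.integrable one_le_two)] at hvar
  simp only [Pi.pow_apply] at hvar
  linarith

end ProbabilityTheory

/-- If `U` with finite second moment satisfies `U =ᵈ V²·U* + (1−V)²·U + V²` with
`U, U*, V` independent, `U* =ᵈ U`, `V ~ Uniform[0,1]`, then `E[U²] = 11/9` and
`Var(U) = 2/9`. -/
theorem fixed_point_second_moment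
    {Ω : Type*} [MeasureSpace Ω] [IsProbabilityMeasure (ℙ : Measure Ω)]
    (U Ustar V : Ω → ℝ)
    (hUm : Measurable U) (hUsm : Measurable Ustar) (hVm : Measurable V)
    (hindep : iIndepFun ![U, Ustar, V] ℙ)
    (hid : Measure.map Ustar ℙ = Measure.map U ℙ)
    (hunif : Measure.map V ℙ = volume.restrict (Set.Icc (0 : ℝ) 1))
    (hfix : Measure.map (fun ω => (V ω) ^ 2 * Ustar ω + (1 - V ω) ^ 2 * U ω + (V ω) ^ 2) ℙ
      = Measure.map U ℙ)
    (hint : Integrable U ℙ) (hint2 : Integrable (fun ω => (U ω) ^ 2) ℙ) :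
    (∫ ω, (U ω) ^ 2 ∂ℙ = 11 / 9) ∧ variance U ℙ = 2 / 9 := by
  have hUs : IdentDistrib Ustar U ℙ ℙ := ⟨hUsm.aemeasurable, hUm.aemeasurable, hid⟩
  have hW : IdentDistrib (fun ω => V ω ^ 2 * Ustar ω + (1 - V ω) ^ 2 * U ω + V ω ^ 2) U ℙ ℙ :=
    ⟨by fun_prop, hUm.aemeasurable, hfix⟩
  have hU2 : MemLp U 2 ℙ := (memLp_two_iff_integrable_sq hUm.aestronglyMeasurable).mpr hint2
  have hind : IndepFun Ustar U ℙ := hindep.indepFun (show (1 : Fin 3) ≠ 0 by decide)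
  have hindV : IndepFun (fun ω => (Ustar ω, U ω)) V ℙ := by
    simpa using hindep.indepFun_prodMk (by intro i; fin_cases i <;> assumption) 1 0 2
      (by decide) (by decide)
  have hsecond : ∫ ω, U ω ^ 2 ∂ℙ = variance U ℙ + (∫ ω, U ω ∂ℙ) ^ 2 := by
    rw [variance_eq_sub hU2]
    simp
  have hmean : ∫ ω, U ω ∂ℙ = 1 := by
    have h := hindV.integral_comp_eq_intervalIntegral (hUsm.prodMk hUm) hVm hunif
      (F := fun p => p.2 ^ 2 * p.1.1 + (1 - p.2) ^ 2 * p.1.2 + p.2 ^ 2)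
      (by fun_prop : Measurable _).stronglyMeasurable (hW.integrable_iff.mpr hint)
    simp_rw [hW.integral_eq, integral_mul_add_mul_add_const (hUs.integrable_iff.mpr hint) hint,
      hUs.integral_eq, integral_zero_one_conditional_mean] at h
    linarith
  have hvar : variance U ℙ = 2 / 9 := by
    have hW2 := hW.comp (measurable_id.pow_const 2)
    have h := hindV.integral_comp_eq_intervalIntegral (hUsm.prodMk hUm) hVm hunif
      (F := fun p => (p.2 ^ 2 * p.1.1 + (1 - p.2) ^ 2 * p.1.2 + p.2 ^ 2) ^ 2)
      (by fun_prop : Measurable _).stronglyMeasurable (hW2.integrable_iff.mpr hint2)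
    simp_rw [show ∫ ω, (V ω ^ 2 * Ustar ω + (1 - V ω) ^ 2 * U ω + V ω ^ 2) ^ 2 ∂ℙ
        = ∫ ω, U ω ^ 2 ∂ℙ from hW2.integral_eq,
      hind.integral_sq_mul_add_mul_add_const (hUs.memLp_iff.mpr hU2) hU2, hUs.integral_eq,
      hUs.variance_eq, integral_zero_one_conditional_second_moment, hsecond, hmean] at h
    linarith
  exact ⟨by rw [hsecond, hvar, hmean]; norm_num, hvar⟩
end

section
/- If U′ with finite second moment satisfies U′ =ᵈ (1−V)²·U′ + V²·U + V², with U′, V, U independent, V ~ Beta(1,θ), E[U] = 1, E[U²] = 11/9, then E[U′²] = (12θ+76)/(3(1+θ)(2+θ)(3+θ)) and Var(U′) = (28θ+4)/(3(1+θ)²(2+θ)(3+θ)). -/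
/-!
Regrouping `V²U + V²` as `V²(U + 1)` puts the fixed-point equation in the form `U′ =ᵈ A U′ + B`
with `A = (1 - V)²`, `B = V²(U + 1)` and `(A, B)` independent of `U′`. Taking first and second
moments of both sides gives two linear equations
`E U′ = E A · E U′ + E B` and `E U′² = E A² · E U′² + 2 E[AB] · E U′ + E B²`,
whose coefficients are mixed moments `E[Vᵃ(1 - V)ᵇ]` of the Beta(1, θ) law times moments of
`U + 1`. Writing `x = 1 - (1 - x)` gives
`E[Vᵃ⁺¹(1 - V)ᵇ] = E[Vᵃ(1 - V)ᵇ] - E[Vᵃ(1 - V)ᵇ⁺¹]`, and starting from `E[(1 - V)ᵇ] = θ / (θ + b)`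
induction on `a` yields `E[Vᵃ(1 - V)ᵇ] = θ a! / ((θ + b)(θ + b + 1)⋯(θ + b + a))`.
-/

open MeasureTheory ProbabilityTheory Set
open scoped ENNReal Nat

lemma memLp_comp_of_ae_mem_isCompact {Ω : Type*} [MeasurableSpace Ω] {μ : Measure Ω}
    [IsFiniteMeasure μ] {V : Ω → ℝ} {K : Set ℝ} {f : ℝ → ℝ} (hK : IsCompact K)
    (hf : Continuous f) (hV : AEMeasurable V μ) (hVK : ∀ᵐ ω ∂μ, V ω ∈ K) (p : ℝ≥0∞) :
    MemLp (fun ω => f (V ω)) p μ := by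
  obtain ⟨C, hC⟩ := hK.exists_bound_of_continuousOn hf.continuousOn
  exact .of_bound (hf.comp_aestronglyMeasurable hV.aestronglyMeasurable) C
    (hVK.mono fun ω hω => hC _ hω)

namespace ProbabilityTheory

lemma beta_one_left {θ : ℝ} (hθ : 0 < θ) : beta 1 θ = θ⁻¹ := by
  rw [beta, Real.Gamma_one, add_comm, Real.Gamma_add_one hθ.ne']
  field_simp [(Real.Gamma_pos_of_pos hθ).ne']

lemma betaPDF_one_left {θ x : ℝ} (hθ : 0 < θ) :
    betaPDF 1 θ x = (Ioo 0 1).indicator (fun x => ENNReal.ofReal (θ * (1 - x) ^ (θ - 1))) x := by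
  by_cases hx : x ∈ Ioo 0 1
  · rw [betaPDF_of_pos_lt_one hx.1 hx.2, indicator_of_mem hx, beta_one_left hθ]
    simp
  · rw [indicator_of_notMem hx, betaPDF_eq, if_neg (show ¬(0 < x ∧ x < 1) from hx),
      ENNReal.ofReal_zero]

lemma betaMeasure_one_left {θ : ℝ} (hθ : 0 < θ) :
    betaMeasure 1 θ = volume.withDensity fun v =>
      if v ∈ Icc (0 : ℝ) 1 then ENNReal.ofReal (θ * (1 - v) ^ (θ - 1)) else 0 := by
  refine withDensity_congr_ae ?_
  have hends : ∀ᵐ x : ℝ, x ∉ ({0, 1} : Set ℝ) :=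
    (Set.toFinite _).measure_zero volume |> measure_eq_zero_iff_ae_notMem.1
  filter_upwards [hends] with x hx
  rw [betaPDF_one_left hθ, indicator_apply]
  simp only [mem_insert_iff, mem_singleton_iff, not_or] at hx
  by_cases hx' : x ∈ Icc (0 : ℝ) 1
  · have : x ∈ Ioo (0 : ℝ) 1 := ⟨lt_of_le_of_ne hx'.1 (Ne.symm hx.1), lt_of_le_of_ne hx'.2 hx.2⟩
    simp [this, hx']
  · have : x ∉ Ioo (0 : ℝ) 1 := fun h => hx' (Ioo_subset_Icc_self h)
    rw [if_neg this, if_neg hx']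

lemma ae_mem_Icc_betaMeasure (α β : ℝ) : ∀ᵐ x ∂betaMeasure α β, x ∈ Icc 0 1 := by
  rw [betaMeasure,
    ae_withDensity_iff (f := betaPDF α β) (measurable_betaPDFReal α β).ennreal_ofReal]
  refine ae_of_all _ fun x hx => ⟨?_, ?_⟩
  · by_contra! h
    exact hx (betaPDF_eq_zero_of_nonpos h.le)
  · by_contra! h
    exact hx (betaPDF_eq_zero_of_one_le h.le)

lemma integral_betaMeasure_one_left {θ : ℝ} (hθ : 0 < θ) (f : ℝ → ℝ) :
    ∫ x, f x ∂betaMeasure 1 θ = ∫ x in (0 : ℝ)..1, θ * (1 - x) ^ (θ - 1) * f x := by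
  have hdens : ∀ x, betaPDF 1 θ x
      = ((Ioo 0 1).indicator (fun x => (θ * (1 - x) ^ (θ - 1)).toNNReal) x : NNReal) := by
    intro x
    rw [betaPDF_one_left hθ]
    by_cases hx : x ∈ Ioo (0 : ℝ) 1 <;> simp [hx, ENNReal.ofReal]
  have hmeas : Measurable ((Ioo 0 1).indicator fun x => (θ * (1 - x) ^ (θ - 1)).toNNReal) :=
    (by fun_prop : Measurable _).indicator measurableSet_Ioo
  rw [betaMeasure, funext hdens, integral_withDensity_eq_integral_smul hmeas,
    intervalIntegral.integral_of_le zero_le_one, integral_Ioc_eq_integral_Ioo,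
    ← integral_indicator measurableSet_Ioo]
  congr 1 with x
  by_cases hx : x ∈ Ioo (0 : ℝ) 1
  · have : 0 ≤ θ * (1 - x) ^ (θ - 1) := by
      have := hx.2; positivity
    simp [hx, NNReal.smul_def, Real.coe_toNNReal _ this]
  · simp [hx]

lemma integral_one_sub_pow_betaMeasure_one_left {θ : ℝ} (hθ : 0 < θ) (j : ℕ) :
    ∫ x, (1 - x) ^ j ∂betaMeasure 1 θ = θ / (θ + j) := by
  have hpos : 0 < θ + j := by positivity
  rw [integral_betaMeasure_one_left hθ]
  calc ∫ x in (0 : ℝ)..1, θ * (1 - x) ^ (θ - 1) * (1 - x) ^ j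
      = ∫ u in (0 : ℝ)..1, θ * u ^ (θ - 1) * u ^ j := by
        simpa using intervalIntegral.integral_comp_sub_left
          (fun u => θ * u ^ (θ - 1) * u ^ j) (a := 0) (b := 1) 1
    _ = ∫ u in (0 : ℝ)..1, θ * u ^ (θ - 1 + j) := by
        refine intervalIntegral.integral_congr_ae (ae_of_all _ fun u hu => ?_)
        rw [uIoc_of_le zero_le_one] at hu
        rw [mul_assoc, ← Real.rpow_natCast u j, ← Real.rpow_add hu.1]
    _ = θ / (θ + j) := by
        rw [intervalIntegral.integral_const_mul, integral_rpow (Or.inl (by linarith)),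
          show θ - 1 + j + 1 = θ + j by ring, Real.one_rpow, Real.zero_rpow hpos.ne']
        field_simp
        ring

lemma integral_pow_mul_one_sub_pow_betaMeasure_one_left {θ : ℝ} (hθ : 0 < θ) (a b : ℕ) :
    ∫ x, x ^ a * (1 - x) ^ b ∂betaMeasure 1 θ
      = θ * a ! / (ascPochhammer ℝ (a + 1)).eval (θ + b) := by
  have := isProbabilityMeasureBeta one_pos hθ
  have hint : ∀ a b : ℕ, Integrable (fun x : ℝ => x ^ a * (1 - x) ^ b) (betaMeasure 1 θ) :=
    fun a b => memLp_one_iff_integrable.1 <| memLp_comp_of_ae_mem_isCompact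
      (f := fun x => x ^ a * (1 - x) ^ b) isCompact_Icc (by fun_prop) aemeasurable_id'
      (ae_mem_Icc_betaMeasure 1 θ) 1
  induction a generalizing b with
  | zero =>
    simp [integral_one_sub_pow_betaMeasure_one_left hθ]
  | succ a ih =>
    have hsplit : ∀ x : ℝ, x ^ (a + 1) * (1 - x) ^ b
        = x ^ a * (1 - x) ^ b - x ^ a * (1 - x) ^ (b + 1) := fun x => by ring
    simp_rw [hsplit]
    rw [integral_sub (hint a b) (hint a (b + 1)), ih b, ih (b + 1)]
    have hleft : ∀ (n : ℕ) (y : ℝ), (ascPochhammer ℝ (n + 1)).eval y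
        = y * (ascPochhammer ℝ n).eval (y + 1) := fun n y => by
      simp [ascPochhammer_succ_left, Polynomial.eval_comp]
    set P := (ascPochhammer ℝ a).eval (θ + b + 1)
    have e₁ : (ascPochhammer ℝ (a + 1)).eval (θ + b) = (θ + b) * P := hleft a _
    have e₂ : (ascPochhammer ℝ (a + 1)).eval (θ + ↑(b + 1)) = P * (θ + b + 1 + a) := by
      rw [ascPochhammer_succ_eval, Nat.cast_succ, ← add_assoc]
    have e₃ : (ascPochhammer ℝ (a + 1 + 1)).eval (θ + b) = (θ + b) * (P * (θ + b + 1 + a)) := by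
      rw [hleft, ascPochhammer_succ_eval]
    rw [e₁, e₂, e₃, Nat.factorial_succ, Nat.cast_mul]
    field_simp
    push_cast
    ring

end ProbabilityTheory

lemma integral_pow_mul_one_sub_pow_of_map_eq_betaMeasure {Ω : Type*} [MeasurableSpace Ω]
    {μ : Measure Ω} {V : Ω → ℝ} {θ : ℝ} (hθ : 0 < θ) (hV : AEMeasurable V μ)
    (hVθ : μ.map V = betaMeasure 1 θ) (a b : ℕ) :
    ∫ ω, V ω ^ a * (1 - V ω) ^ b ∂μ = θ * a ! / (ascPochhammer ℝ (a + 1)).eval (θ + b) := by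
  rw [← integral_pow_mul_one_sub_pow_betaMeasure_one_left hθ, ← hVθ,
    integral_map hV (by fun_prop)]

lemma integral_add_const_sq {Ω : Type*} [MeasurableSpace Ω] {μ : Measure Ω}
    [IsProbabilityMeasure μ] {X : Ω → ℝ} (hX : MemLp X 2 μ) (c : ℝ) :
    ∫ ω, (X ω + c) ^ 2 ∂μ = ∫ ω, X ω ^ 2 ∂μ + 2 * c * ∫ ω, X ω ∂μ + c ^ 2 := by
  have hX₂ : Integrable (fun ω => X ω ^ 2) μ := (memLp_two_iff_integrable_sq hX.1).1 hX
  have hX₁ : Integrable (fun ω => 2 * c * X ω) μ := (hX.integrable one_le_two).const_mul _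
  calc ∫ ω, (X ω + c) ^ 2 ∂μ = ∫ ω, X ω ^ 2 + 2 * c * X ω + c ^ 2 ∂μ := by
        congr 1 with ω; ring
    _ = _ := by
        have hX₂₁ : Integrable (fun ω => X ω ^ 2 + 2 * c * X ω) μ := hX₂.add hX₁
        rw [integral_add hX₂₁ (integrable_const _), integral_add hX₂ hX₁,
          integral_const_mul, integral_const, probReal_univ, one_smul]

section StochasticFixedPoint

variable {Ω : Type*} [MeasurableSpace Ω] {μ : Measure Ω} {A B X : Ω → ℝ}

lemma integral_eq_of_identDistrib_mul_add (hA : Integrable A μ) (hB : Integrable B μ)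
    (hX : Integrable X μ) (hAX : IndepFun A X μ)
    (hfix : IdentDistrib (fun ω => A ω * X ω + B ω) X μ μ) :
    μ[X] = μ[A] * μ[X] + μ[B] := by
  have hAX_int : Integrable (fun ω => A ω * X ω) μ := hAX.integrable_mul hA hX
  conv_lhs => rw [← hfix.integral_eq]
  rw [integral_add hAX_int hB, hAX.integral_fun_mul_eq_mul_integral hA.1 hX.1]

lemma integral_sq_eq_of_identDistrib_mul_add [IsFiniteMeasure μ] (hA : MemLp A 2 μ)
    (hB : MemLp B 2 μ) (hX : MemLp X 2 μ) (hABX : IndepFun (fun ω => (A ω, B ω)) X μ)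
    (hfix : IdentDistrib (fun ω => A ω * X ω + B ω) X μ μ) :
    ∫ ω, X ω ^ 2 ∂μ = (∫ ω, A ω ^ 2 ∂μ) * (∫ ω, X ω ^ 2 ∂μ)
      + 2 * (∫ ω, A ω * B ω ∂μ) * μ[X] + ∫ ω, B ω ^ 2 ∂μ := by
  have hsq : ∀ {f : Ω → ℝ}, MemLp f 2 μ → Integrable (fun ω => f ω ^ 2) μ := fun hf =>
    (memLp_two_iff_integrable_sq hf.1).1 hf
  have hA2X2 : IndepFun (fun ω => A ω ^ 2) (fun ω => X ω ^ 2) μ :=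
    hABX.comp (measurable_fst.pow_const 2) (measurable_id.pow_const 2)
  have hABX' : IndepFun (fun ω => A ω * B ω) X μ :=
    hABX.comp (measurable_fst.mul measurable_snd) measurable_id
  have hAB : Integrable (fun ω => A ω * B ω) μ := hA.integrable_mul hB
  have hX1 : Integrable X μ := hX.integrable one_le_two
  have h₁ : Integrable (fun ω => A ω ^ 2 * X ω ^ 2) μ := hA2X2.integrable_mul (hsq hA) (hsq hX)
  have h₂ : Integrable (fun ω => 2 * (A ω * B ω * X ω)) μ :=
    (hABX'.integrable_mul hAB hX1).const_mul 2
  calc ∫ ω, X ω ^ 2 ∂μ = ∫ ω, (A ω * X ω + B ω) ^ 2 ∂μ :=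
        (hfix.comp (measurable_id.pow_const 2)).integral_eq.symm
    _ = ∫ ω, (A ω ^ 2 * X ω ^ 2 + 2 * (A ω * B ω * X ω) + B ω ^ 2) ∂μ := by
        congr 1 with ω; ring
    _ = _ := by
        have h₁₂ : Integrable (fun ω => A ω ^ 2 * X ω ^ 2 + 2 * (A ω * B ω * X ω)) μ :=
          h₁.add h₂
        rw [integral_add h₁₂ (hsq hB), integral_add h₁ h₂, integral_const_mul,
          hA2X2.integral_fun_mul_eq_mul_integral (hsq hA).1 (hsq hX).1,
          hABX'.integral_fun_mul_eq_mul_integral hAB.1 hX1.1]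
        ring

end StochasticFixedPoint

lemma hoppe_fixed_point_moment_equations {Ω : Type*} [MeasureSpace Ω]
    [IsProbabilityMeasure (ℙ : Measure Ω)] {U' U V : Ω → ℝ}
    (hU'm : Measurable U') (hUm : Measurable U) (hVm : Measurable V)
    (hVI : ∀ᵐ ω ∂ℙ, V ω ∈ Icc (0 : ℝ) 1) (hindep : iIndepFun ![U', V, U] ℙ)
    (hfix : Measure.map (fun ω => (1 - V ω) ^ 2 * U' ω + V ω ^ 2 * U ω + V ω ^ 2) ℙ
      = Measure.map U' ℙ) (hU' : MemLp U' 2 ℙ) (hU : MemLp U 2 ℙ) :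
    ∫ ω, U' ω ∂ℙ = (∫ ω, (1 - V ω) ^ 2 ∂ℙ) * ∫ ω, U' ω ∂ℙ
        + (∫ ω, V ω ^ 2 ∂ℙ) * ∫ ω, U ω + 1 ∂ℙ ∧
      ∫ ω, U' ω ^ 2 ∂ℙ = (∫ ω, (1 - V ω) ^ 4 ∂ℙ) * ∫ ω, U' ω ^ 2 ∂ℙ
        + 2 * ((∫ ω, V ω ^ 2 * (1 - V ω) ^ 2 ∂ℙ) * ∫ ω, U ω + 1 ∂ℙ) * ∫ ω, U' ω ∂ℙ
        + (∫ ω, V ω ^ 4 ∂ℙ) * ∫ ω, (U ω + 1) ^ 2 ∂ℙ := by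
  have hVU : IndepFun V U ℙ := by simpa using hindep.indepFun (i := 1) (j := 2) (by decide)
  have hVU_U' : IndepFun (fun ω => (V ω, U ω)) U' ℙ := by
    simpa using hindep.indepFun_prodMk (fun i => by fin_cases i <;> assumption) 1 2 0
      (by decide) (by decide)
  have hfactor : ∀ {f g : ℝ → ℝ}, Measurable f → Measurable g →
      ∫ ω, f (V ω) * g (U ω) ∂ℙ = (∫ ω, f (V ω) ∂ℙ) * ∫ ω, g (U ω) ∂ℙ := fun hf hg =>
    hVU.integral_fun_comp_mul_comp hVm.aemeasurable hUm.aemeasurable hf.aestronglyMeasurable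
      hg.aestronglyMeasurable
  have hbdd : ∀ {f : ℝ → ℝ}, Continuous f → ∀ p, MemLp (fun ω => f (V ω)) p ℙ :=
    fun hf p => memLp_comp_of_ae_mem_isCompact isCompact_Icc hf hVm.aemeasurable hVI p
  have hA : MemLp (fun ω => (1 - V ω) ^ 2) 2 ℙ := hbdd (f := fun x => (1 - x) ^ 2) (by fun_prop) 2
  have hB : MemLp (fun ω => V ω ^ 2 * (U ω + 1)) 2 ℙ :=
    (hU.add (memLp_const 1)).mul' (hbdd (f := fun x => x ^ 2) (by fun_prop) ⊤)
  have hABU' : IndepFun (fun ω => ((1 - V ω) ^ 2, V ω ^ 2 * (U ω + 1))) U' ℙ :=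
    hVU_U'.comp (by fun_prop : Measurable fun p : ℝ × ℝ => ((1 - p.1) ^ 2, p.1 ^ 2 * (p.2 + 1)))
      measurable_id
  have hfix' : IdentDistrib (fun ω => (1 - V ω) ^ 2 * U' ω + V ω ^ 2 * (U ω + 1)) U' ℙ ℙ :=
    ⟨by fun_prop, hU'm.aemeasurable, by rw [← hfix]; congr 1 with ω; ring⟩
  refine ⟨(integral_eq_of_identDistrib_mul_add (hA.integrable one_le_two)
      (hB.integrable one_le_two) (hU'.integrable one_le_two)
      (hABU'.comp measurable_fst measurable_id) hfix').trans ?_,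
    (integral_sq_eq_of_identDistrib_mul_add hA hB hU' hABU' hfix').trans ?_⟩
  · rw [hfactor (f := fun x => x ^ 2) (g := fun u => u + 1) (by fun_prop) (by fun_prop)]
  · have hAB : ∫ ω, (1 - V ω) ^ 2 * (V ω ^ 2 * (U ω + 1)) ∂ℙ
        = ∫ ω, V ω ^ 2 * (1 - V ω) ^ 2 * (U ω + 1) ∂ℙ := by
      congr 1 with ω; ring
    have hB2 : ∫ ω, (V ω ^ 2 * (U ω + 1)) ^ 2 ∂ℙ = ∫ ω, V ω ^ 4 * (U ω + 1) ^ 2 ∂ℙ := by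
      congr 1 with ω; ring
    simp_rw [← pow_mul]
    rw [hAB, hB2, hfactor (f := fun x => x ^ 2 * (1 - x) ^ 2) (g := fun u => u + 1)
      (by fun_prop) (by fun_prop), hfactor (f := fun x => x ^ 4) (g := fun u => (u + 1) ^ 2)
      (by fun_prop) (by fun_prop)]

lemma hoppe_fixed_point_moment_equations_beta {Ω : Type*} [MeasureSpace Ω]
    [IsProbabilityMeasure (ℙ : Measure Ω)] {θ : ℝ} (hθ : 0 < θ) {U' U V : Ω → ℝ}
    (hU'm : Measurable U') (hUm : Measurable U) (hVm : Measurable V)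
    (hindep : iIndepFun ![U', V, U] ℙ) (hbeta : Measure.map V ℙ = betaMeasure 1 θ)
    (hEU : ∫ ω, U ω ∂ℙ = 1) (hEU2 : ∫ ω, U ω ^ 2 ∂ℙ = 11 / 9)
    (hfix : Measure.map (fun ω => (1 - V ω) ^ 2 * U' ω + V ω ^ 2 * U ω + V ω ^ 2) ℙ
      = Measure.map U' ℙ) (hU' : MemLp U' 2 ℙ) (hU : MemLp U 2 ℙ) :
    ∫ ω, U' ω ∂ℙ = θ / (θ + 2) * ∫ ω, U' ω ∂ℙ + 4 / ((θ + 1) * (θ + 2)) ∧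
      ∫ ω, U' ω ^ 2 ∂ℙ = θ / (θ + 4) * ∫ ω, U' ω ^ 2 ∂ℙ
        + 8 * θ / ((θ + 2) * (θ + 3) * (θ + 4)) * ∫ ω, U' ω ∂ℙ
        + 304 / (3 * (θ + 1) * (θ + 2) * (θ + 3) * (θ + 4)) := by
  have hVI : ∀ᵐ ω ∂ℙ, V ω ∈ Icc (0 : ℝ) 1 :=
    ae_of_ae_map hVm.aemeasurable (hbeta ▸ ae_mem_Icc_betaMeasure 1 θ)
  obtain ⟨h₁, h₂⟩ := hoppe_fixed_point_moment_equations hU'm hUm hVm hVI hindep hfix hU' hU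
  have hmom := integral_pow_mul_one_sub_pow_of_map_eq_betaMeasure hθ hVm.aemeasurable hbeta
  have m₀₂ := hmom 0 2
  have m₀₄ := hmom 0 4
  have m₂₀ := hmom 2 0
  have m₄₀ := hmom 4 0
  simp only [pow_zero, one_mul, mul_one] at m₀₂ m₀₄ m₂₀ m₄₀
  have hEU₁ : ∫ ω, U ω + 1 ∂ℙ = 2 := by
    rw [integral_add (hU.integrable one_le_two) (integrable_const 1), hEU, integral_const,
      probReal_univ, one_smul, one_add_one_eq_two]
  have hEU₂ : ∫ ω, (U ω + 1) ^ 2 ∂ℙ = 38 / 9 := by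
    rw [integral_add_const_sq hU, hEU, hEU2]
    norm_num
  rw [m₀₂, m₂₀, hEU₁] at h₁
  rw [m₀₄, hmom 2 2, m₄₀, hEU₁, hEU₂] at h₂
  simp only [Nat.factorial, Nat.cast_one, mul_one, Nat.cast_ofNat, zero_add, ascPochhammer_one,
    Polynomial.eval_X, Nat.succ_eq_add_one, Nat.reduceAdd, CharP.cast_eq_zero, add_zero,
    ascPochhammer_succ_eval, Nat.reduceMul] at h₁ h₂
  refine ⟨h₁.trans ?_, h₂.trans ?_⟩ <;> field_simp <;> ring

theorem hoppe_fixed_point_second_moment_general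
    {Ω : Type*} [MeasureSpace Ω] [IsProbabilityMeasure (ℙ : Measure Ω)]
    (θ : ℝ) (hθ : 0 < θ)
    (U' U V : Ω → ℝ)
    (hU'm : Measurable U') (hUm : Measurable U) (hVm : Measurable V)
    (hindep : iIndepFun ![U', V, U] ℙ)
    (hbeta : Measure.map V ℙ
      = volume.withDensity fun v =>
          if v ∈ Set.Icc (0 : ℝ) 1 then ENNReal.ofReal (θ * (1 - v) ^ (θ - 1)) else 0)
    (hEU : ∫ ω, U ω ∂ℙ = 1)
    (hEU2 : ∫ ω, (U ω) ^ 2 ∂ℙ = 11 / 9)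
    (hfix : Measure.map (fun ω => (1 - V ω) ^ 2 * U' ω + (V ω) ^ 2 * U ω + (V ω) ^ 2) ℙ
      = Measure.map U' ℙ)
    (hintU'2 : Integrable (fun ω => (U' ω) ^ 2) ℙ)
    (hintU2 : Integrable (fun ω => (U ω) ^ 2) ℙ) :
    (∫ ω, (U' ω) ^ 2 ∂ℙ = (12 * θ + 76) / (3 * (1 + θ) * (2 + θ) * (3 + θ))) ∧
      variance U' ℙ = (28 * θ + 4) / (3 * (1 + θ) ^ 2 * (2 + θ) * (3 + θ)) := by
  rw [← betaMeasure_one_left hθ] at hbeta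
  have hU' : MemLp U' 2 ℙ := (memLp_two_iff_integrable_sq hU'm.aestronglyMeasurable).2 hintU'2
  have hU : MemLp U 2 ℙ := (memLp_two_iff_integrable_sq hUm.aestronglyMeasurable).2 hintU2
  obtain ⟨h₁, h₂⟩ :=
    hoppe_fixed_point_moment_equations_beta hθ hU'm hUm hVm hindep hbeta hEU hEU2 hfix hU' hU
  have hm₁ : ∫ ω, U' ω ∂ℙ = 2 / (1 + θ) := by
    field_simp at h₁ ⊢
    linear_combination h₁ / 2
  have hm₂ : ∫ ω, U' ω ^ 2 ∂ℙ = (12 * θ + 76) / (3 * (1 + θ) * (2 + θ) * (3 + θ)) := by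
    rw [hm₁] at h₂
    field_simp at h₂ ⊢
    refine mul_right_cancel₀ (b := 4 * (θ + 1)) (by positivity) ?_
    linear_combination h₂
  refine ⟨hm₂, ?_⟩
  simp only [variance_eq_sub hU', Pi.pow_apply, hm₁, hm₂]
  field_simp
  ring

/-- If `U′` with finite second moment satisfies `U′ =ᵈ (1−V)²·U′ + V²·U + V²`, with
`U′, V, U` independent, `V ~ Beta(1,θ)`, `E[U] = 1`, `E[U²] = 11/9`, then
`E[U′²] = (12θ+76)/(3(1+θ)(2+θ)(3+θ))` and `Var(U′) = (28θ+4)/(3(1+θ)²(2+θ)(3+θ))`. -/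
theorem hoppe_fixed_point_second_moment
    {Ω : Type*} [MeasureSpace Ω] [IsProbabilityMeasure (ℙ : Measure Ω)]
    (θ : ℝ) (hθ : 0 < θ)
    (U' U V : Ω → ℝ)
    (hU'm : Measurable U') (hUm : Measurable U) (hVm : Measurable V)
    (hindep : iIndepFun ![U', V, U] ℙ)
    (hbeta : Measure.map V ℙ
      = volume.withDensity fun v =>
          if v ∈ Set.Icc (0 : ℝ) 1 then ENNReal.ofReal (θ * (1 - v) ^ (θ - 1)) else 0)
    (hEU : ∫ ω, U ω ∂ℙ = 1)
    (hEU2 : ∫ ω, (U ω) ^ 2 ∂ℙ = 11 / 9)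
    (hfix : Measure.map (fun ω => (1 - V ω) ^ 2 * U' ω + (V ω) ^ 2 * U ω + (V ω) ^ 2) ℙ
      = Measure.map U' ℙ)
    (hintU' : Integrable U' ℙ) (hintU : Integrable U ℙ)
    (hintU'2 : Integrable (fun ω => (U' ω) ^ 2) ℙ)
    (hintU2 : Integrable (fun ω => (U ω) ^ 2) ℙ) :
    (∫ ω, (U' ω) ^ 2 ∂ℙ = (12 * θ + 76) / (3 * (1 + θ) * (2 + θ) * (3 + θ))) ∧
      variance U' ℙ = (28 * θ + 4) / (3 * (1 + θ) ^ 2 * (2 + θ) * (3 + θ)) :=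
  hoppe_fixed_point_second_moment_general θ hθ U' U V hU'm hUm hVm hindep hbeta hEU hEU2 hfix
    hintU'2 hintU2
end

section
/- For the 2×2 matrix A* = [[(1−V)², V(1−V)], [0, 1−V]] with V ∈ [0,1], the eigenvalues of (A*)ᵀA* are λ±(V) = (1−V)²·{1 + V² − V(1 ± √((1−V)² + 1))}, and the spectral norm satisfies ‖(A*)ᵀA*‖ = λ₋(V) ≤ (1−V)²(1 + V² + V). -/
/-!
The eigenvalues of a 2 × 2 matrix are fixed by its trace and determinant, and
`det (Aᵀ A) = (det A)² = (1 - V)⁶` is exactly `λ₊ λ₋` because `r = √((1 - V)² + 1)` satisfies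
`r² = (1 - V)² + 1`. For the symmetric matrix `Aᵀ A` the operator norm is the spectral radius,
and `|λ₊| ≤ λ₋` since `λ₊ ≤ λ₋` and `λ₊ + λ₋ = tr (Aᵀ A) ≥ 0`. The final bound amounts to
`r ≤ 2`.
-/

open Polynomial Matrix

theorem Matrix.norm_toEuclideanCLM_eq_of_mem_spectrum {n : Type*} [Fintype n] [DecidableEq n]
    {M : Matrix n n ℝ} (hM : M.IsHermitian) {μ : ℝ} (hμ : μ ∈ spectrum ℝ M)
    (hle : ∀ ν ∈ spectrum ℝ M, |ν| ≤ μ) :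
    ‖toEuclideanCLM (𝕜 := ℝ) M‖ = μ := by
  have hradius := ContinuousLinearMap.spectralRadius_eq_nnnorm _
    (hM.isSelfAdjoint.map (toEuclideanCLM (n := n) (𝕜 := ℝ)))
  rw [spectralRadius, AlgEquiv.spectrum_eq] at hradius
  have hsup : (⨆ ν ∈ spectrum ℝ M, (‖ν‖₊ : ENNReal)) = ‖μ‖₊ :=
    le_antisymm
      (iSup₂_le fun ν hν => by
        simpa [← NNReal.coe_le_coe] using (hle ν hν).trans (le_abs_self μ))
      (le_iSup₂_of_le μ hμ le_rfl)
  rw [hsup, ENNReal.coe_inj, ← NNReal.coe_inj, coe_nnnorm, coe_nnnorm, Real.norm_eq_abs] at hradius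
  rw [← hradius, abs_of_nonneg ((abs_nonneg μ).trans (hle μ hμ))]

theorem Matrix.spectrum_eq_of_charpoly_eq_mul_X_sub_C {K n : Type*} [Field K] [Fintype n]
    [DecidableEq n] {M : Matrix n n K} {a b : K} (h : M.charpoly = (X - C a) * (X - C b)) :
    spectrum K M = {a, b} := by
  ext ν
  simp [mem_spectrum_iff_isRoot_charpoly, h, sub_eq_zero]

theorem Matrix.norm_toEuclideanCLM_eq_of_charpoly_eq_mul_X_sub_C {n : Type*} [Fintype n]
    [DecidableEq n] {M : Matrix n n ℝ} (hM : M.IsHermitian) {a b : ℝ}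
    (h : M.charpoly = (X - C a) * (X - C b)) (hab : |a| ≤ b) :
    ‖toEuclideanCLM (𝕜 := ℝ) M‖ = b := by
  have hb : |b| ≤ b := abs_le.2 ⟨by linarith [abs_nonneg a], le_rfl⟩
  have hspec := spectrum_eq_of_charpoly_eq_mul_X_sub_C h
  exact norm_toEuclideanCLM_eq_of_mem_spectrum hM (by simp [hspec]) (by simp [hspec, hab, hb])

theorem Matrix.charpoly_fin_two_eq_of_trace_of_det {R : Type*} [CommRing R] [Nontrivial R]
    {M : Matrix (Fin 2) (Fin 2) R} {a b : R} (htr : M.trace = a + b) (hdet : M.det = a * b) :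
    M.charpoly = (X - C a) * (X - C b) := by
  rw [charpoly_fin_two, htr, hdet, map_add, map_mul]
  ring

/-- For `A* = [[(1−V)², V(1−V)], [0, 1−V]]` with `V ∈ [0,1]`, the eigenvalues of
`(A*)ᵀA*` are `λ±(V) = (1−V)²·(1 + V² − V(1 ± √((1−V)²+1)))` (so the characteristic
polynomial factors as `(X − λ₊)(X − λ₋)`), the spectral norm of `(A*)ᵀA*` equals the
larger eigenvalue `λ₋(V)`, and `λ₋(V) ≤ (1−V)²(1 + V² + V)`. -/
theorem spectral_norm_of_recursion_matrix (V : ℝ) (hV : V ∈ Set.Icc (0 : ℝ) 1)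
    (A : Matrix (Fin 2) (Fin 2) ℝ)
    (hA : A = !![(1 - V) ^ 2, V * (1 - V); 0, 1 - V])
    (lamPlus lamMinus : ℝ)
    (hPlus : lamPlus = (1 - V) ^ 2 * (1 + V ^ 2 - V * (1 + Real.sqrt ((1 - V) ^ 2 + 1))))
    (hMinus : lamMinus = (1 - V) ^ 2 * (1 + V ^ 2 - V * (1 - Real.sqrt ((1 - V) ^ 2 + 1)))) :
    (Aᵀ * A).charpoly = (X - C lamPlus) * (X - C lamMinus) ∧
      ‖Matrix.toEuclideanCLM (𝕜 := ℝ) (Aᵀ * A)‖ = lamMinus ∧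
      lamMinus ≤ (1 - V) ^ 2 * (1 + V ^ 2 + V) := by
  obtain ⟨hV0, hV1⟩ := hV
  set r := Real.sqrt ((1 - V) ^ 2 + 1)
  have hr2 : r ^ 2 = (1 - V) ^ 2 + 1 := Real.sq_sqrt (by positivity)
  have hr0 : 0 ≤ r := Real.sqrt_nonneg _
  have hpsd : (Aᵀ * A).PosSemidef := by
    simpa using posSemidef_conjTranspose_mul_self A
  have htrace : (Aᵀ * A).trace = lamPlus + lamMinus := by
    simp only [hA, hPlus, hMinus, trace_fin_two, mul_apply, Fin.sum_univ_two, transpose_apply,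
      of_apply, cons_val', cons_val_zero, cons_val_one, cons_val_fin_one, mul_zero, add_zero]
    ring
  have hdet : (Aᵀ * A).det = lamPlus * lamMinus := by
    rw [det_mul, det_transpose, hA, det_fin_two_of, hPlus, hMinus]
    linear_combination (V ^ 2 * (1 - V) ^ 4) * hr2
  have hcharpoly := charpoly_fin_two_eq_of_trace_of_det htrace hdet
  have hle : lamPlus ≤ lamMinus := by
    rw [hPlus, hMinus]
    nlinarith [mul_nonneg (mul_nonneg (sq_nonneg (1 - V)) hV0) hr0]
  have hsum : 0 ≤ lamPlus + lamMinus := htrace ▸ hpsd.trace_nonneg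
  refine ⟨hcharpoly,
    norm_toEuclideanCLM_eq_of_charpoly_eq_mul_X_sub_C hpsd.isHermitian hcharpoly
      (abs_le.2 ⟨by linarith, hle⟩), ?_⟩
  have hr_le_two : r ≤ 2 := by nlinarith
  rw [hMinus]
  nlinarith [mul_nonneg (mul_nonneg (sq_nonneg (1 - V)) hV0) (sub_nonneg.2 hr_le_two)]
end

section
/- For V ~ Beta(1,θ) with θ > 0, E[(1−V)²(1 + V² + V)] = (θ/(2+θ))·[1 + 1/(3+θ) + 2/((4+θ)(3+θ))] < 1, establishing the contraction condition E[‖(A*)ᵀA*‖] < 1 for the matrix A* = [[(1−V)², V(1−V)], [0, 1−V]]. -/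
open MeasureTheory

/-- For `V ~ Beta(1,θ)` with `θ > 0` (density `θ(1−v)^{θ−1}` on `[0,1]`),
`E[(1−V)²(1 + V² + V)] = (θ/(2+θ))·[1 + 1/(3+θ) + 2/((4+θ)(3+θ))] < 1`,
which establishes the contraction condition `E[‖(A*)ᵀA*‖] < 1` since
`‖(A*)ᵀA*‖ ≤ (1−V)²(1+V²+V)` pointwise. -/
theorem beta_contraction_condition (θ : ℝ) (hθ : 0 < θ) :
    (∫ v, (1 - v) ^ 2 * (1 + v ^ 2 + v)
        ∂(volume.withDensity fun v =>
            if v ∈ Set.Icc (0 : ℝ) 1 then ENNReal.ofReal (θ * (1 - v) ^ (θ - 1)) else 0)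
      = θ / (2 + θ) * (1 + 1 / (3 + θ) + 2 / ((4 + θ) * (3 + θ)))) ∧
    θ / (2 + θ) * (1 + 1 / (3 + θ) + 2 / ((4 + θ) * (3 + θ))) < 1 := by
  have h2 : (0:ℝ) < 2 + θ := by linarith
  have h3 : (0:ℝ) < 3 + θ := by linarith
  have h4 : (0:ℝ) < 4 + θ := by linarith
  constructor
  · -- express the density as an ℝ≥0-valued function
    set f : ℝ → NNReal := fun v =>
      if v ∈ Set.Icc (0 : ℝ) 1 then Real.toNNReal (θ * (1 - v) ^ (θ - 1)) else 0 with hf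
    have hfmeas : Measurable f := by
      apply Measurable.ite measurableSet_Icc _ measurable_const
      exact (measurable_const.mul ((measurable_const.sub measurable_id).pow
        measurable_const)).real_toNNReal
    have hdens : (fun v =>
        if v ∈ Set.Icc (0 : ℝ) 1 then ENNReal.ofReal (θ * (1 - v) ^ (θ - 1)) else 0)
        = fun v => (f v : ENNReal) := by
      funext v
      simp only [hf]
      split <;> simp [ENNReal.ofReal]
    rw [hdens, integral_withDensity_eq_integral_smul hfmeas]
    have hind : (fun v => f v • ((1 - v) ^ 2 * (1 + v ^ 2 + v)))
        = Set.indicator (Set.Icc (0:ℝ) 1)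
          (fun v => θ * (1 - v) ^ (θ - 1) * ((1 - v) ^ 2 * (1 + v ^ 2 + v))) := by
      funext v
      simp only [hf, Set.indicator]
      split
      · rename_i hv
        have hnn : 0 ≤ θ * (1 - v) ^ (θ - 1) :=
          mul_nonneg hθ.le (Real.rpow_nonneg (by linarith [hv.2]) _)
        simp [NNReal.smul_def, Real.coe_toNNReal _ hnn]
      · simp
    rw [hind, integral_indicator measurableSet_Icc, integral_Icc_eq_integral_Ioc,
      ← intervalIntegral.integral_of_le (by norm_num : (0:ℝ) ≤ 1)]
    have hsub : (∫ x in (0:ℝ)..1,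
          θ * (1 - x) ^ (θ - 1) * ((1 - x) ^ 2 * (1 + x ^ 2 + x)))
        = ∫ u in (0:ℝ)..1,
          θ * u ^ (θ - 1) * (u ^ 2 * (1 + (1 - u) ^ 2 + (1 - u))) := by
      have := intervalIntegral.integral_comp_sub_left
        (fun u => θ * u ^ (θ - 1) * (u ^ 2 * (1 + (1 - u) ^ 2 + (1 - u)))) 1
        (a := 0) (b := 1)
      simp only [sub_zero, sub_self] at this
      rw [← this]
      apply intervalIntegral.integral_congr
      intro x _
      ring_nf
    rw [hsub]
    have hcongr : (∫ u in (0:ℝ)..1,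
          θ * u ^ (θ - 1) * (u ^ 2 * (1 + (1 - u) ^ 2 + (1 - u))))
        = ∫ u in (0:ℝ)..1,
          θ * (3 * u ^ (θ + 1) - 3 * u ^ (θ + 2) + u ^ (θ + 3)) := by
      apply intervalIntegral.integral_congr
      intro u hu
      dsimp only
      rw [Set.uIcc_of_le (by norm_num : (0:ℝ) ≤ 1)] at hu
      rcases eq_or_lt_of_le hu.1 with h0 | h0
      · rw [← h0]
        rw [Real.zero_rpow (by positivity : (0:ℝ) < θ + 1).ne',
          Real.zero_rpow (by positivity : (0:ℝ) < θ + 2).ne',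
          Real.zero_rpow (by positivity : (0:ℝ) < θ + 3).ne']
        norm_num
      · have e1 : u ^ (θ - 1) * u ^ (2:ℕ) = u ^ (θ + 1) := by
          rw [← Real.rpow_natCast u 2, ← Real.rpow_add h0,
            show θ - 1 + ((2:ℕ):ℝ) = θ + 1 by push_cast; ring]
        have e2 : u ^ (θ - 1) * u ^ (3:ℕ) = u ^ (θ + 2) := by
          rw [← Real.rpow_natCast u 3, ← Real.rpow_add h0,
            show θ - 1 + ((3:ℕ):ℝ) = θ + 2 by push_cast; ring]
        have e3 : u ^ (θ - 1) * u ^ (4:ℕ) = u ^ (θ + 3) := by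
          rw [← Real.rpow_natCast u 4, ← Real.rpow_add h0,
            show θ - 1 + ((4:ℕ):ℝ) = θ + 3 by push_cast; ring]
        rw [← e1, ← e2, ← e3]
        ring
    rw [hcongr]
    have i1 : (∫ u in (0:ℝ)..1, u ^ (θ + 1)) = 1 / (θ + 2) := by
      rw [integral_rpow (Or.inl (by linarith))]
      rw [Real.one_rpow, Real.zero_rpow (by positivity : (0:ℝ) < θ + 1 + 1).ne']
      ring_nf
    have i2 : (∫ u in (0:ℝ)..1, u ^ (θ + 2)) = 1 / (θ + 3) := by
      rw [integral_rpow (Or.inl (by linarith))]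
      rw [Real.one_rpow, Real.zero_rpow (by positivity : (0:ℝ) < θ + 2 + 1).ne']
      ring_nf
    have i3 : (∫ u in (0:ℝ)..1, u ^ (θ + 3)) = 1 / (θ + 4) := by
      rw [integral_rpow (Or.inl (by linarith))]
      rw [Real.one_rpow, Real.zero_rpow (by positivity : (0:ℝ) < θ + 3 + 1).ne']
      ring_nf
    have hInt1 : IntervalIntegrable (fun u => u ^ (θ + 1)) volume 0 1 :=
      intervalIntegral.intervalIntegrable_rpow (Or.inl (by linarith))
    have hInt2 : IntervalIntegrable (fun u => u ^ (θ + 2)) volume 0 1 :=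
      intervalIntegral.intervalIntegrable_rpow (Or.inl (by linarith))
    have hInt3 : IntervalIntegrable (fun u => u ^ (θ + 3)) volume 0 1 :=
      intervalIntegral.intervalIntegrable_rpow (Or.inl (by linarith))
    rw [intervalIntegral.integral_const_mul]
    rw [show (fun u : ℝ => 3 * u ^ (θ + 1) - 3 * u ^ (θ + 2) + u ^ (θ + 3))
      = fun u : ℝ => (3 * u ^ (θ + 1) - 3 * u ^ (θ + 2)) + u ^ (θ + 3) from rfl]
    rw [intervalIntegral.integral_add (((hInt1.const_mul 3).sub (hInt2.const_mul 3))) hInt3,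
      intervalIntegral.integral_sub (hInt1.const_mul 3) (hInt2.const_mul 3),
      intervalIntegral.integral_const_mul, intervalIntegral.integral_const_mul,
      i1, i2, i3]
    field_simp
    ring
  · rw [show θ / (2 + θ) * (1 + 1 / (3 + θ) + 2 / ((4 + θ) * (3 + θ)))
        = (θ * (18 + 8*θ + θ^2)) / ((2+θ)*((3+θ)*(4+θ))) by field_simp; ring]
    rw [div_lt_one (by positivity)]
    nlinarith
end
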